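/- arXiv:2210.02557 — 2 statements merged into one kernel-verified Lean document; each statement's English description precedes it below -/
import Mathlib

section
/- Let N channels have rates r_i > 0 and availability probabilities p_i ∈ (0,1], let Δ > 0, and let i* satisfy r_{i*} p_{i*} ≥ r_j p_j for all j. If the file size is an integer multiple of Δ r_{i*}, i.e., F = k·Δ·r_{i*} for some positive integer k, then E[T(i*,F)] = F/(r_{i*} p_{i*}) and E[T(i*,F)] ≤ E[T(j,F)] for every channel j; that is, the max-throughput channel is static optimal for such F. -/
/-- Expected static transfer time of a file of size `F` over a Bernoulli channel with
rate `r`, availability probability `p`, and slot duration `Δ`: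
`E[T] = Δ(k/p + 1{α>0}(1-p)/p + α)` where `k = ⌊F/(Δr)⌋` and `α = F/(Δr) - k`. -/
noncomputable def ET (Δ r p F : ℝ) : ℝ :=
  Δ * ((⌊F / (Δ * r)⌋₊ : ℝ) / p
    + (if 0 < F / (Δ * r) - (⌊F / (Δ * r)⌋₊ : ℝ) then (1 - p) / p else 0)
    + (F / (Δ * r) - (⌊F / (Δ * r)⌋₊ : ℝ)))

/-!
Writing `F / (Δ r) = k + α`, the fluid time `F / (r p) = Δ (k + α) / p` falls short of
`E[T]` by exactly `Δ (1 - p) / p · (1{α > 0} - α)`, which is nonnegative because `α < 1`.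
So `F / (r p)` is a lower bound for every channel, attained when `α = 0`; at a multiple of
`Δ r_{i⋆}` the max-throughput channel attains it, and its bound is the smallest of all.
-/

lemma ET_sub_div_eq {Δ r p : ℝ} (hΔ : Δ ≠ 0) (hr : r ≠ 0) (hp : p ≠ 0) (F : ℝ) :
    ET Δ r p F - F / (r * p) =
      Δ * (1 - p) / p *
        ((if 0 < F / (Δ * r) - (⌊F / (Δ * r)⌋₊ : ℝ) then 1 else 0)
          - (F / (Δ * r) - (⌊F / (Δ * r)⌋₊ : ℝ))) := by
  have hfluid : F / (r * p) = Δ * (F / (Δ * r)) / p := by field_simp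
  rw [ET, hfluid]
  split_ifs <;> field_simp <;> ring

lemma div_le_ET {Δ r p : ℝ} (hΔ : 0 < Δ) (hr : 0 < r) (hp₀ : 0 < p) (hp₁ : p ≤ 1) (F : ℝ) :
    F / (r * p) ≤ ET Δ r p F := by
  have hfract_lt_one : F / (Δ * r) - (⌊F / (Δ * r)⌋₊ : ℝ) < 1 := by
    linarith [Nat.lt_floor_add_one (F / (Δ * r))]
  have hgap : 0 ≤ ET Δ r p F - F / (r * p) := by
    rw [ET_sub_div_eq hΔ.ne' hr.ne' hp₀.ne']
    refine mul_nonneg (div_nonneg (mul_nonneg hΔ.le (by linarith)) hp₀.le) ?_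
    split_ifs <;> linarith
  linarith

lemma ET_eq_div_of_div_eq_natCast {Δ r p F : ℝ} (hΔ : Δ ≠ 0) (hr : r ≠ 0) (hp : p ≠ 0)
    {k : ℕ} (hk : F / (Δ * r) = k) : ET Δ r p F = F / (r * p) := by
  have hgap := ET_sub_div_eq hΔ hr hp F
  rw [hk, Nat.floor_natCast, sub_self, if_neg (lt_irrefl 0), sub_zero, mul_zero] at hgap
  linarith

theorem max_throughput_static_optimal_at_multiples_general
    {N : ℕ} (r p : Fin N → ℝ) (Δ : ℝ) (hΔ : 0 < Δ)
    (hr : ∀ i, 0 < r i) (hp : ∀ i, p i ∈ Set.Ioc (0 : ℝ) 1)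
    (istar : Fin N) (hstar : ∀ j, r j * p j ≤ r istar * p istar)
    (k : ℕ) (F : ℝ) (hF : F = (k : ℝ) * Δ * r istar) :
    ET Δ (r istar) (p istar) F = F / (r istar * p istar) ∧
      ∀ j : Fin N, ET Δ (r istar) (p istar) F ≤ ET Δ (r j) (p j) F := by
  have hdiv : F / (Δ * r istar) = k := by
    rw [hF]
    field_simp [hΔ.ne', (hr istar).ne']
  have hstar_eq : ET Δ (r istar) (p istar) F = F / (r istar * p istar) :=
    ET_eq_div_of_div_eq_natCast hΔ.ne' (hr istar).ne' (hp istar).1.ne' hdiv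
  refine ⟨hstar_eq, fun j => ?_⟩
  have hF₀ : 0 ≤ F := by rw [hF]; exact mul_nonneg (by positivity) (hr istar).le
  calc ET Δ (r istar) (p istar) F = F / (r istar * p istar) := hstar_eq
    _ ≤ F / (r j * p j) :=
      div_le_div_of_nonneg_left hF₀ (mul_pos (hr j) (hp j).1) (hstar j)
    _ ≤ ET Δ (r j) (p j) F := div_le_ET hΔ (hr j) (hp j).1 (hp j).2 F

/-- If `i⋆` is a max-throughput channel and the file size is an integer multiple of
`Δ r_{i⋆}`, i.e. `F = k Δ r_{i⋆}` with `k` a positive integer, then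
`E[T(i⋆,F)] = F/(r_{i⋆} p_{i⋆})` and channel `i⋆` is static optimal. -/
theorem max_throughput_static_optimal_at_multiples
    {N : ℕ} (r p : Fin N → ℝ) (Δ : ℝ) (hΔ : 0 < Δ)
    (hr : ∀ i, 0 < r i) (hp : ∀ i, p i ∈ Set.Ioc (0 : ℝ) 1)
    (istar : Fin N) (hstar : ∀ j, r j * p j ≤ r istar * p istar)
    (k : ℕ) (hk : 0 < k) (F : ℝ) (hF : F = (k : ℝ) * Δ * r istar) :
    ET Δ (r istar) (p istar) F = F / (r istar * p istar) ∧
      ∀ j : Fin N, ET Δ (r istar) (p istar) F ≤ ET Δ (r j) (p j) F :=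
  max_throughput_static_optimal_at_multiples_general r p Δ hΔ hr hp istar hstar k F hF
end

section
/- Let N channels have rates r_i > 0 and availability probabilities p_i ∈ (0,1], let Δ > 0, and let i* satisfy r_{i*} p_{i*} ≥ r_j p_j for all j. If F = k·Δ·r_{i*} for some positive integer k, then the static policy that uses channel i* for all k transmissions lies in Π(F), its expected transfer time equals F/(r_{i*} p_{i*}), and it minimizes E[T(π,F)] over all π ∈ Π(F); that is, the max-throughput policy coincides with a dynamic optimal policy at such file sizes. -/
/-- A dynamic policy for transferring a file of size `F` over `N` channels with rates
`r` in slots of duration `Δ`: a finite sequence of channel choices `chan 0, …, chan (L-1)`,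
one per successful transmission, such that the remaining file size is positive before
each transmission and the last transmission finishes the file. -/
structure Policy (N : ℕ) (r : Fin N → ℝ) (Δ F : ℝ) where
  L : ℕ
  hL : 0 < L
  chan : ℕ → Fin N
  pos : ∀ n < L, 0 < F - Δ * ∑ m ∈ Finset.range n, r (chan m)
  last : F - Δ * ∑ m ∈ Finset.range (L - 1), r (chan m) ≤ Δ * r (chan (L - 1))

/-- Closed-form expected transfer time of a dynamic policy `π`:
`E[T(π,F)] = Δ(∑_{n=1}^{L-1} 1/p_{π(n)} + (1 - p_{π(L)})/p_{π(L)}) + F_L/r_{π(L)}`. -/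
noncomputable def ETdyn {N : ℕ} {r : Fin N → ℝ} {Δ F : ℝ} (p : Fin N → ℝ)
    (π : Policy N r Δ F) : ℝ :=
  Δ * ((∑ n ∈ Finset.range (π.L - 1), 1 / p (π.chan n))
      + (1 - p (π.chan (π.L - 1))) / p (π.chan (π.L - 1)))
    + (F - Δ * ∑ m ∈ Finset.range (π.L - 1), r (π.chan m)) / r (π.chan (π.L - 1))

/-!
With `c = r_{i⋆} p_{i⋆}` the best throughput, every slot of a policy costs at least its share of
`F / c`: a full transmission over channel `i` takes `Δ / p_i ≥ Δ r_i / c` on average, and the last,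
partial one, moving `F_L ∈ (0, Δ r_i]`, costs `Δ (1 - p_i) / p_i + F_L / r_i`, which is affine in
`F_L` and dominates `F_L / c` at both ends of that interval. Summing gives `E[T(π,F)] ≥ F / c`,
and the static policy on `i⋆` attains this bound when `F` is a multiple of `Δ r_{i⋆}`.
-/

open Finset

namespace Policy

variable {N : ℕ} {r : Fin N → ℝ} {Δ F : ℝ}

def replicate (i : Fin N) (k : ℕ) (hk : 0 < k) (hΔ : 0 < Δ) (hri : 0 < r i)
    (hF : F = k * Δ * r i) : Policy N r Δ F where
  L := k
  hL := hk
  chan := fun _ => i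
  pos n hn := by
    have hnk : (n : ℝ) < k := by exact_mod_cast hn
    simp only [sum_const, card_range, nsmul_eq_mul, hF]
    nlinarith [mul_pos (mul_pos hΔ hri) (sub_pos.2 hnk)]
  last := by
    simp only [sum_const, card_range, nsmul_eq_mul, hF, Nat.cast_pred hk]
    linarith

theorem ETdyn_replicate (p : Fin N → ℝ) (i : Fin N) (k : ℕ) (hk : 0 < k) (hΔ : 0 < Δ)
    (hri : 0 < r i) (hpi : p i ≠ 0) (hF : F = k * Δ * r i) :
    ETdyn p (replicate i k hk hΔ hri hF) = F / (r i * p i) := by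
  simp only [ETdyn, replicate, sum_const, card_range, nsmul_eq_mul, hF, Nat.cast_pred hk]
  field_simp
  ring

end Policy

theorem div_le_one_div_of_mul_le {r p c : ℝ} (hp : 0 < p) (hc : 0 < c) (h : r * p ≤ c) :
    r / c ≤ 1 / p := by
  rw [div_le_div_iff₀ hc hp]
  linarith

theorem div_le_last_slot_time {Δ r p c x : ℝ} (hr : 0 < r) (hp : 0 < p) (hp1 : p ≤ 1)
    (hc : 0 < c) (hrp : r * p ≤ c) (hx : 0 ≤ x) (hxΔ : x ≤ Δ * r) :
    x / c ≤ Δ * ((1 - p) / p) + x / r := by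
  have hΔ : 0 ≤ Δ := nonneg_of_mul_nonneg_left (hx.trans hxΔ) hr
  have hidle : 0 ≤ Δ * ((1 - p) / p) := mul_nonneg hΔ (div_nonneg (sub_nonneg.2 hp1) hp.le)
  rcases le_or_gt r c with hrc | hcr
  · linarith [div_le_div_of_nonneg_left hx hr hrc]
  · have hgain : 0 ≤ 1 / c - 1 / r := sub_nonneg.2 (one_div_le_one_div_of_le hc hcr.le)
    have hslot : Δ * (r / c) ≤ Δ * (1 / p) :=
      mul_le_mul_of_nonneg_left (div_le_one_div_of_mul_le hp hc hrp) hΔ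
    calc x / c = x / r + x * (1 / c - 1 / r) := by ring
      _ ≤ x / r + Δ * r * (1 / c - 1 / r) := by gcongr
      _ = x / r + Δ * (r / c) - Δ := by field_simp; ring
      _ ≤ x / r + Δ * (1 / p) - Δ := by linarith
      _ = Δ * ((1 - p) / p) + x / r := by field_simp; ring

theorem div_le_ETdyn {N : ℕ} {r : Fin N → ℝ} {Δ F : ℝ} (p : Fin N → ℝ)
    (hr : ∀ i, 0 < r i) (hp : ∀ i, p i ∈ Set.Ioc (0 : ℝ) 1) {c : ℝ} (hc : 0 < c)
    (hrp : ∀ j, r j * p j ≤ c) (π : Policy N r Δ F) :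
    F / c ≤ ETdyn p π := by
  set l := π.chan (π.L - 1)
  set S := Δ * ∑ m ∈ range (π.L - 1), r (π.chan m)
  have hFL : 0 < F - S := π.pos (π.L - 1) (Nat.sub_lt π.hL one_pos)
  have hΔ : 0 ≤ Δ := nonneg_of_mul_nonneg_left (hFL.le.trans π.last) (hr l)
  have hfull : S / c ≤ Δ * ∑ n ∈ range (π.L - 1), 1 / p (π.chan n) := by
    rw [mul_div_assoc, sum_div]
    exact mul_le_mul_of_nonneg_left
      (sum_le_sum fun n _ => div_le_one_div_of_mul_le (hp _).1 hc (hrp _)) hΔ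
  have hlast : (F - S) / c ≤ Δ * ((1 - p l) / p l) + (F - S) / r l :=
    div_le_last_slot_time (hr l) (hp l).1 (hp l).2 hc (hrp l) hFL.le π.last
  calc F / c = S / c + (F - S) / c := by ring
    _ ≤ ETdyn p π := by unfold ETdyn; linarith

/-- If the file size is an integer multiple of `Δ r_{i⋆}`, i.e. `F = k Δ r_{i⋆}` with
`k ∈ ℤ_+`, then the static policy using the max-throughput channel `i⋆` for all `k`
transmissions is a valid dynamic policy, its expected transfer time equals
`F/(r_{i⋆} p_{i⋆})`, and it minimizes the expected transfer time over all dynamic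
policies. -/
theorem max_throughput_dynamic_optimal_at_multiples
    {N : ℕ} (r p : Fin N → ℝ) (Δ : ℝ) (hΔ : 0 < Δ)
    (hr : ∀ i, 0 < r i) (hp : ∀ i, p i ∈ Set.Ioc (0 : ℝ) 1)
    (istar : Fin N) (hstar : ∀ j, r j * p j ≤ r istar * p istar)
    (k : ℕ) (hk : 0 < k) (F : ℝ) (hF : F = (k : ℝ) * Δ * r istar) :
    ∃ π₀ : Policy N r Δ F,
      π₀.L = k ∧ (∀ n, π₀.chan n = istar) ∧
      ETdyn p π₀ = F / (r istar * p istar) ∧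
      ∀ π : Policy N r Δ F, ETdyn p π₀ ≤ ETdyn p π := by
  have hT := Policy.ETdyn_replicate p istar k hk hΔ (hr istar) (hp istar).1.ne' hF
  refine ⟨Policy.replicate istar k hk hΔ (hr istar) hF, rfl, fun _ => rfl, hT, fun π => ?_⟩
  rw [hT]
  exact div_le_ETdyn p hr hp (mul_pos (hr istar) (hp istar).1) hstar π
end
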